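/- arXiv:1810.06614 — 2 statements merged into one kernel-verified Lean document; each statement's English description precedes it below -/
import Mathlib

section
/- Let n ≥ 2, let F : ℝ^{n+1} → ℝ be continuously differentiable, and let x ∈ ℝ^{n+1} satisfy F(x) = 0, |x| < 1, ∇F(x) ≠ 0 and d := x·∇F(x) − ∂_{x_{n+1}}F(x) ≠ 0. Let H = {y ∈ ℝ^{n+1} : y·∇F(x) = x·∇F(x)} be the tangent hyperplane to the level set {F = 0} at x. Then |∇F(x)|² − (x·∇F(x))² > 0, H ∩ S^n does not contain e_{n+1}, and Λ(H ∩ S^n) is the (n−1)-dimensional sphere in ℝ^n with center (∂_{x₁}F(x), …, ∂_{x_n}F(x))/d and radius √(|∇F(x)|² − (x·∇F(x))²)/|d|. -/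
/-!
Write a point of `Sⁿ` as `y = (u, t)` with `t ≠ 1`, so that `Λ y = u / (1 - t)` and
`‖u‖² = 1 - t²`. For the plane `⟪y, g⟫ = c`, put `v = (g₁, …, gₙ)` and `d = c - g_{n+1}`.
Expanding the square gives
`‖Λ y - v / d‖² - (‖g‖² - c²) / d² = 2 (c - ⟪y, g⟫) / ((1 - t) d)`,
so a point of the sphere lies on the plane exactly when its image lies on the claimed sphere.
Every point of `ℝⁿ` is hit, by the inverse projection `z ↦ (2z, ‖z‖² - 1) / (‖z‖² + 1)`.
Positivity of `‖g‖² - c²` for `g = ∇F(x)`, `c = ⟪x, g⟫` is Cauchy–Schwarz with `‖x‖ < 1`.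
-/

open RealInnerProductSpace

/-- The stereographic projection `Λ` from the unit sphere in `ℝ^{n+1}` (minus the north pole)
to `ℝ^n`, given by `Λ(x) = (x₁/(1 - x_{n+1}), …, x_n/(1 - x_{n+1}))`. -/
noncomputable def stereo (n : ℕ) (x : EuclideanSpace ℝ (Fin (n + 1))) :
    EuclideanSpace ℝ (Fin n) :=
  WithLp.toLp 2 fun i => x i.castSucc / (1 - x (Fin.last n))

/-- The north pole `e_{n+1} = (0, …, 0, 1)`. -/
noncomputable def northPole (n : ℕ) : EuclideanSpace ℝ (Fin (n + 1)) :=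
  EuclideanSpace.single (Fin.last n) 1

/-- The center `(∂₁F(x), …, ∂ₙF(x)) / d` with `d = x·∇F(x) − ∂_{n+1}F(x)` of the stereographic
image of the circle cut from `Sⁿ` by the tangent hyperplane to `{F = 0}` at `x`. -/
noncomputable def surfaceMapCenter (n : ℕ) (F : EuclideanSpace ℝ (Fin (n + 1)) → ℝ)
    (x : EuclideanSpace ℝ (Fin (n + 1))) : EuclideanSpace ℝ (Fin n) :=
  WithLp.toLp 2 fun i =>
    gradient F x i.castSucc /
      (∑ j, x j * gradient F x j - gradient F x (Fin.last n))

section StereographicCoordinates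

variable {n : ℕ}

theorem sum_mul_eq_inner {m : ℕ} (y g : EuclideanSpace ℝ (Fin m)) :
    ∑ j, y j * g j = ⟪y, g⟫ := by
  simp [PiLp.inner_apply, mul_comm]

noncomputable def dropLast (y : EuclideanSpace ℝ (Fin (n + 1))) : EuclideanSpace ℝ (Fin n) :=
  WithLp.toLp 2 fun i => y i.castSucc

theorem norm_sq_eq_norm_sq_dropLast_add (y : EuclideanSpace ℝ (Fin (n + 1))) :
    ‖y‖ ^ 2 = ‖dropLast y‖ ^ 2 + y (Fin.last n) ^ 2 := by
  simp [EuclideanSpace.norm_sq_eq, Fin.sum_univ_castSucc, dropLast]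

theorem inner_eq_inner_dropLast_add (y g : EuclideanSpace ℝ (Fin (n + 1))) :
    ⟪y, g⟫ = ⟪dropLast y, dropLast g⟫ + y (Fin.last n) * g (Fin.last n) := by
  simp [← sum_mul_eq_inner, Fin.sum_univ_castSucc, dropLast]

theorem stereo_eq_smul_dropLast (y : EuclideanSpace ℝ (Fin (n + 1))) :
    stereo n y = (1 - y (Fin.last n))⁻¹ • dropLast y := by
  ext i
  simp [stereo, dropLast, div_eq_inv_mul]

theorem inner_northPole (g : EuclideanSpace ℝ (Fin (n + 1))) :
    ⟪northPole n, g⟫ = g (Fin.last n) := by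
  simp [northPole, ← sum_mul_eq_inner, PiLp.single_apply]

theorem last_ne_one_of_norm_eq_one {y : EuclideanSpace ℝ (Fin (n + 1))} (hy : ‖y‖ = 1)
    (hne : y ≠ northPole n) : y (Fin.last n) ≠ 1 := by
  intro hlast
  have hN : ‖northPole n‖ = 1 := by simp [northPole]
  refine hne ((inner_eq_one_iff_of_norm_eq_one (𝕜 := ℝ) hy hN).mp ?_)
  rw [real_inner_comm, inner_northPole, hlast]

noncomputable def stereoInv (z : EuclideanSpace ℝ (Fin n)) : EuclideanSpace ℝ (Fin (n + 1)) :=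
  WithLp.toLp 2 <|
    Fin.snoc (fun i => 2 * z i / (‖z‖ ^ 2 + 1)) ((‖z‖ ^ 2 - 1) / (‖z‖ ^ 2 + 1))

theorem dropLast_stereoInv (z : EuclideanSpace ℝ (Fin n)) :
    dropLast (stereoInv z) = (2 / (‖z‖ ^ 2 + 1)) • z := by
  ext i
  simp [dropLast, stereoInv]
  ring

theorem stereoInv_last (z : EuclideanSpace ℝ (Fin n)) :
    stereoInv z (Fin.last n) = (‖z‖ ^ 2 - 1) / (‖z‖ ^ 2 + 1) := by
  simp [stereoInv]

theorem norm_stereoInv (z : EuclideanSpace ℝ (Fin n)) : ‖stereoInv z‖ = 1 := by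
  have hs : ‖z‖ ^ 2 + 1 ≠ 0 := by positivity
  have hsq : ‖stereoInv z‖ ^ 2 = 1 := by
    rw [norm_sq_eq_norm_sq_dropLast_add, dropLast_stereoInv, stereoInv_last, norm_smul,
      mul_pow, Real.norm_eq_abs, sq_abs]
    field_simp
    ring
  exact (pow_eq_one_iff_of_nonneg (norm_nonneg _) two_ne_zero).mp hsq

theorem stereo_stereoInv (z : EuclideanSpace ℝ (Fin n)) : stereo n (stereoInv z) = z := by
  have hs : ‖z‖ ^ 2 + 1 ≠ 0 := by positivity
  have hone : 1 - stereoInv z (Fin.last n) = 2 / (‖z‖ ^ 2 + 1) := by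
    rw [stereoInv_last]
    field_simp
    ring
  rw [stereo_eq_smul_dropLast, dropLast_stereoInv, hone, smul_smul,
    inv_mul_cancel₀ (by positivity), one_smul]

theorem stereoInv_last_ne_one (z : EuclideanSpace ℝ (Fin n)) :
    stereoInv z (Fin.last n) ≠ 1 := by
  have hs : ‖z‖ ^ 2 + 1 ≠ 0 := by positivity
  rw [stereoInv_last, ne_eq, div_eq_one_iff_eq hs]
  intro h
  linarith

end StereographicCoordinates

theorem sq_inner_lt_norm_sq {E : Type*} [NormedAddCommGroup E] [InnerProductSpace ℝ E] {x g : E}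
    (hx : ‖x‖ < 1) (hg : g ≠ 0) : ⟪x, g⟫ ^ 2 < ‖g‖ ^ 2 := by
  have hg' : 0 < ‖g‖ := norm_pos_iff.mpr hg
  have hlt : |⟪x, g⟫| < ‖g‖ :=
    calc |⟪x, g⟫| ≤ ‖x‖ * ‖g‖ := abs_real_inner_le_norm x g
      _ < 1 * ‖g‖ := mul_lt_mul_of_pos_right hx hg'
      _ = ‖g‖ := one_mul _
  simpa only [sq_abs] using pow_lt_pow_left₀ hlt (abs_nonneg _) two_ne_zero

section HyperplaneSection

variable {n : ℕ} (g : EuclideanSpace ℝ (Fin (n + 1))) (c : ℝ)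

theorem northPole_not_mem_plane (hc : c ≠ g (Fin.last n)) :
    northPole n ∉ {y : EuclideanSpace ℝ (Fin (n + 1)) | ⟪y, g⟫ = c} := by
  simpa [inner_northPole] using hc.symm

theorem norm_sq_stereo_sub_sub {y : EuclideanSpace ℝ (Fin (n + 1))} (hy : ‖y‖ = 1)
    (ht : y (Fin.last n) ≠ 1) (hc : c ≠ g (Fin.last n)) :
    ‖stereo n y - (c - g (Fin.last n))⁻¹ • dropLast g‖ ^ 2
        - (‖g‖ ^ 2 - c ^ 2) / (c - g (Fin.last n)) ^ 2
      = 2 * (c - ⟪y, g⟫) / ((1 - y (Fin.last n)) * (c - g (Fin.last n))) := by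
  have hu : ‖dropLast y‖ ^ 2 = 1 - y (Fin.last n) ^ 2 := by
    linear_combination (norm_sq_eq_norm_sq_dropLast_add y).symm + (‖y‖ + 1) * hy
  have ht' : 1 - y (Fin.last n) ≠ 0 := sub_ne_zero.mpr (Ne.symm ht)
  have hd : c - g (Fin.last n) ≠ 0 := sub_ne_zero.mpr hc
  rw [stereo_eq_smul_dropLast, norm_sub_sq_real, norm_smul, norm_smul, real_inner_smul_left,
    real_inner_smul_right, mul_pow, mul_pow, Real.norm_eq_abs, Real.norm_eq_abs, sq_abs, sq_abs,
    hu, norm_sq_eq_norm_sq_dropLast_add g, inner_eq_inner_dropLast_add y g]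
  field_simp
  ring

theorem norm_stereo_sub_eq_iff {y : EuclideanSpace ℝ (Fin (n + 1))} (hy : ‖y‖ = 1)
    (ht : y (Fin.last n) ≠ 1) (hc : c ≠ g (Fin.last n)) (hcg : c ^ 2 ≤ ‖g‖ ^ 2) :
    ‖stereo n y - (c - g (Fin.last n))⁻¹ • dropLast g‖ =
        √(‖g‖ ^ 2 - c ^ 2) / |c - g (Fin.last n)| ↔ ⟪y, g⟫ = c := by
  have ht' : 1 - y (Fin.last n) ≠ 0 := sub_ne_zero.mpr (Ne.symm ht)
  have hd : c - g (Fin.last n) ≠ 0 := sub_ne_zero.mpr hc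
  rw [← Real.sqrt_sq_eq_abs, ← Real.sqrt_div' _ (sq_nonneg _), eq_comm,
    Real.sqrt_eq_iff_eq_sq (div_nonneg (sub_nonneg.mpr hcg) (sq_nonneg _)) (norm_nonneg _),
    eq_comm, ← sub_eq_zero, norm_sq_stereo_sub_sub g c hy ht hc, div_eq_zero_iff, mul_eq_zero,
    sub_eq_zero]
  simp [ht', hd, eq_comm]

theorem stereo_image_plane_inter_sphere (hc : c ≠ g (Fin.last n)) (hcg : c ^ 2 ≤ ‖g‖ ^ 2) :
    stereo n '' ({y | ⟪y, g⟫ = c} ∩ {y | ‖y‖ = 1}) =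
      {z | ‖z - (c - g (Fin.last n))⁻¹ • dropLast g‖ =
        √(‖g‖ ^ 2 - c ^ 2) / |c - g (Fin.last n)|} := by
  ext z
  constructor
  · rintro ⟨y, ⟨hplane, hy⟩, rfl⟩
    have ht : y (Fin.last n) ≠ 1 := last_ne_one_of_norm_eq_one hy <| by
      rintro rfl
      exact northPole_not_mem_plane g c hc hplane
    exact (norm_stereo_sub_eq_iff g c hy ht hc hcg).mpr hplane
  · intro hz
    refine ⟨stereoInv z, ⟨?_, norm_stereoInv z⟩, stereo_stereoInv z⟩
    rw [← stereo_stereoInv z] at hz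
    exact (norm_stereo_sub_eq_iff g c (norm_stereoInv z) (stereoInv_last_ne_one z) hc hcg).mp hz

end HyperplaneSection

theorem surfaceMapCenter_eq_smul_dropLast (n : ℕ) (F : EuclideanSpace ℝ (Fin (n + 1)) → ℝ)
    (x : EuclideanSpace ℝ (Fin (n + 1))) :
    surfaceMapCenter n F x =
      (⟪x, gradient F x⟫ - gradient F x (Fin.last n))⁻¹ • dropLast (gradient F x) := by
  ext i
  simp [surfaceMapCenter, dropLast, sum_mul_eq_inner, div_eq_inv_mul]

theorem stmt3_general (n : ℕ) (F : EuclideanSpace ℝ (Fin (n + 1)) → ℝ)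
    (x : EuclideanSpace ℝ (Fin (n + 1)))
    (hx1 : ‖x‖ < 1) (hgrad : gradient F x ≠ 0)
    (hd : ∑ j, x j * gradient F x j - gradient F x (Fin.last n) ≠ 0) :
    0 < ‖gradient F x‖ ^ 2 - (∑ j, x j * gradient F x j) ^ 2 ∧
    northPole n ∉
      {y : EuclideanSpace ℝ (Fin (n + 1)) |
          ∑ j, y j * gradient F x j = ∑ j, x j * gradient F x j} ∩
        {y | ‖y‖ = 1} ∧
    stereo n ''
        ({y : EuclideanSpace ℝ (Fin (n + 1)) |
            ∑ j, y j * gradient F x j = ∑ j, x j * gradient F x j} ∩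
          {y | ‖y‖ = 1}) =
      {y : EuclideanSpace ℝ (Fin n) |
        ‖y - surfaceMapCenter n F x‖ =
          Real.sqrt (‖gradient F x‖ ^ 2 - (∑ j, x j * gradient F x j) ^ 2) /
            |∑ j, x j * gradient F x j - gradient F x (Fin.last n)|} := by
  simp only [sum_mul_eq_inner] at hd ⊢
  have hc : ⟪x, gradient F x⟫ ≠ gradient F x (Fin.last n) := sub_ne_zero.mp hd
  have hcg := sq_inner_lt_norm_sq hx1 hgrad
  refine ⟨sub_pos.mpr hcg, fun h => northPole_not_mem_plane _ _ hc h.1, ?_⟩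
  rw [surfaceMapCenter_eq_smul_dropLast]
  exact stereo_image_plane_inter_sphere _ _ hc hcg.le

/-- Explicit form of the surface map: for a `C¹` level hypersurface `{F = 0}` inside the unit
sphere, at a point `x` with `∇F(x) ≠ 0` and `d = x·∇F(x) − ∂_{n+1}F(x) ≠ 0`, one has
`|∇F(x)|² − (x·∇F(x))² > 0`, the tangent hyperplane `H` cuts `Sⁿ` in a subsphere avoiding the
north pole, and `Λ(H ∩ Sⁿ)` is the sphere with center `(∂₁F(x),…,∂ₙF(x))/d` and radius
`√(|∇F(x)|² − (x·∇F(x))²)/|d|`. -/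
theorem stmt3 (n : ℕ) (hn : 2 ≤ n) (F : EuclideanSpace ℝ (Fin (n + 1)) → ℝ)
    (hF : ContDiff ℝ 1 F) (x : EuclideanSpace ℝ (Fin (n + 1)))
    (hx0 : F x = 0) (hx1 : ‖x‖ < 1) (hgrad : gradient F x ≠ 0)
    (hd : ∑ j, x j * gradient F x j - gradient F x (Fin.last n) ≠ 0) :
    0 < ‖gradient F x‖ ^ 2 - (∑ j, x j * gradient F x j) ^ 2 ∧
    northPole n ∉
      {y : EuclideanSpace ℝ (Fin (n + 1)) |
          ∑ j, y j * gradient F x j = ∑ j, x j * gradient F x j} ∩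
        {y | ‖y‖ = 1} ∧
    stereo n ''
        ({y : EuclideanSpace ℝ (Fin (n + 1)) |
            ∑ j, y j * gradient F x j = ∑ j, x j * gradient F x j} ∩
          {y | ‖y‖ = 1}) =
      {y : EuclideanSpace ℝ (Fin n) |
        ‖y - surfaceMapCenter n F x‖ =
          Real.sqrt (‖gradient F x‖ ^ 2 - (∑ j, x j * gradient F x j) ^ 2) /
            |∑ j, x j * gradient F x j - gradient F x (Fin.last n)|} :=
  stmt3_general n F x hx1 hgrad hd
end

section
/- Let I be an open interval and let γ = (γ₁, γ₂) : I → ℝ² be twice continuously differentiable with |γ(t)| < 1, D(t) ≠ 0 and γ₁′(t)γ₂″(t) − γ₁″(t)γ₂′(t) ≠ 0 for all t ∈ I. Then γ₁′(t)² + γ₂′(t)² − E(t)² > 0 for all t, and the curve δ : I → ℝ² is continuously differentiable with δ′(t) ≠ 0 and δ₁′(t)² ≥ δ₂′(t)² for every t ∈ I; that is, δ traces a space like curve in ℝ × ℝ⁺ (at each point its tangent direction (v₁, v₂) satisfies v₂² ≤ v₁², equivalently its normal (n₁, n₂) satisfies n₂² ≥ n₁²). -/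
/-- `D(t) = γ₁(t)γ₂′(t) − γ₂(t)γ₁′(t) + γ₁′(t)`: nonvanishing means the tangent line to `γ`
at `t` does not pass through the north pole `(0,1)`. -/
noncomputable def Dfn (γ₁ γ₂ : ℝ → ℝ) (t : ℝ) : ℝ :=
  γ₁ t * deriv γ₂ t - γ₂ t * deriv γ₁ t + deriv γ₁ t

/-- `E(t) = γ₁(t)γ₂′(t) − γ₂(t)γ₁′(t)`. -/
noncomputable def Efn (γ₁ γ₂ : ℝ → ℝ) (t : ℝ) : ℝ :=
  γ₁ t * deriv γ₂ t - γ₂ t * deriv γ₁ t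

/-- First component `δ₁(t) = γ₂′(t)/D(t)` of the image curve (the center coordinate). -/
noncomputable def delta1 (γ₁ γ₂ : ℝ → ℝ) (t : ℝ) : ℝ :=
  deriv γ₂ t / Dfn γ₁ γ₂ t

/-- Second component `δ₂(t) = √(γ₁′(t)² + γ₂′(t)² − E(t)²)/|D(t)|` (the radius coordinate). -/
noncomputable def delta2 (γ₁ γ₂ : ℝ → ℝ) (t : ℝ) : ℝ :=
  Real.sqrt ((deriv γ₁ t) ^ 2 + (deriv γ₂ t) ^ 2 - Efn γ₁ γ₂ t ^ 2) / |Dfn γ₁ γ₂ t|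

/-!
Lagrange's identity `F = (1 - |γ|²)|γ′|² + (γ·γ′)²`, with `F = |γ′|² - E²`, makes `F` positive
inside the unit disc as soon as `γ′ ≠ 0`, which regularity guarantees. As `√F ≥ 0`, the radius is
`δ₂ = |√F / D|`, a `C¹` function wherever `F > 0` and `D ≠ 0`. Differentiating,
`δ₁′ = (1 - γ₂)(γ₁′γ₂″ - γ₁″γ₂′) / D²` and
`4F·D⁴·(δ₁′² - δ₂′²) = 4(1 - |γ|²)((1 - γ₂)γ₁′ + γ₁γ₂′)²(γ₁′γ₂″ - γ₁″γ₂′)²`,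
which is nonnegative inside the unit disc.
-/

open Real

/-- `F / |γ′|² = 1 - dist(0, tangent line)²`, so `F > 0` says that the tangent line meets the unit
circle in two points. -/
noncomputable def Ffn (γ₁ γ₂ : ℝ → ℝ) (t : ℝ) : ℝ :=
  deriv γ₁ t ^ 2 + deriv γ₂ t ^ 2 - Efn γ₁ γ₂ t ^ 2

theorem delta2_eq_abs (γ₁ γ₂ : ℝ → ℝ) :
    delta2 γ₁ γ₂ = fun t ↦ |√(Ffn γ₁ γ₂ t) / Dfn γ₁ γ₂ t| := by
  funext t
  rw [abs_div, abs_of_nonneg (sqrt_nonneg _)]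
  rfl

section Algebra

variable {p q p₁ q₁ p₂ q₂ : ℝ}

theorem sq_add_sq_sub_cross_sq_pos (hpq : p ^ 2 + q ^ 2 < 1) (hv : 0 < p₁ ^ 2 + q₁ ^ 2) :
    0 < p₁ ^ 2 + q₁ ^ 2 - (p * q₁ - q * p₁) ^ 2 := by
  have lagrange : p₁ ^ 2 + q₁ ^ 2 - (p * q₁ - q * p₁) ^ 2
      = (1 - (p ^ 2 + q ^ 2)) * (p₁ ^ 2 + q₁ ^ 2) + (p * p₁ + q * q₁) ^ 2 := by ring
  rw [lagrange]
  nlinarith [mul_pos (sub_pos.2 hpq) hv, sq_nonneg (p * p₁ + q * q₁)]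

theorem spacelike_ineq {D D' F F' : ℝ} (hpq : p ^ 2 + q ^ 2 ≤ 1)
    (hD : D = p * q₁ - q * p₁ + p₁) (hD' : D' = p * q₂ - q * p₂ + p₂)
    (hF : F = p₁ ^ 2 + q₁ ^ 2 - (p * q₁ - q * p₁) ^ 2)
    (hF' : F' = 2 * (p₁ * p₂ + q₁ * q₂ - (p * q₁ - q * p₁) * (p * q₂ - q * p₂))) :
    (F' * D - 2 * F * D') ^ 2 ≤ 4 * F * ((1 - q) * (p₁ * q₂ - p₂ * q₁)) ^ 2 := by
  have key : 4 * F * ((1 - q) * (p₁ * q₂ - p₂ * q₁)) ^ 2 - (F' * D - 2 * F * D') ^ 2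
      = 4 * (1 - (p ^ 2 + q ^ 2)) * ((1 - q) * p₁ + p * q₁) ^ 2 * (p₁ * q₂ - p₂ * q₁) ^ 2 := by
    subst hD hD' hF hF'
    ring
  have : 0 ≤ 1 - (p ^ 2 + q ^ 2) := by linarith
  have : 0 ≤ 4 * (1 - (p ^ 2 + q ^ 2)) * ((1 - q) * p₁ + p * q₁) ^ 2 * (p₁ * q₂ - p₂ * q₁) ^ 2 := by
    positivity
  linarith

end Algebra

theorem Ffn_pos {γ₁ γ₂ : ℝ → ℝ} {t : ℝ} (hin : γ₁ t ^ 2 + γ₂ t ^ 2 < 1)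
    (hreg : deriv γ₁ t * deriv (deriv γ₂) t - deriv (deriv γ₁) t * deriv γ₂ t ≠ 0) :
    0 < Ffn γ₁ γ₂ t := by
  have hv : deriv γ₁ t ≠ 0 ∨ deriv γ₂ t ≠ 0 := by
    by_contra! h
    exact hreg (by rw [h.1, h.2]; ring)
  exact sq_add_sq_sub_cross_sq_pos hin (by rcases hv with h | h <;> positivity)

theorem sq_deriv_sqrt_div_le {F F' D D' c : ℝ} (hF : 0 < F)
    (h : (F' * D - 2 * F * D') ^ 2 ≤ 4 * F * c ^ 2) :
    ((F' / (2 * √F) * D - √F * D') / D ^ 2) ^ 2 ≤ (c / D ^ 2) ^ 2 := by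
  have hs : 0 < √F := sqrt_pos.2 hF
  have hnum : F' / (2 * √F) * D - √F * D' = (F' * D - 2 * F * D') / (2 * √F) := by
    field_simp
    rw [sq_sqrt hF.le]
    ring
  rw [hnum, div_pow, div_pow, div_pow, mul_pow, sq_sqrt hF.le]
  gcongr
  rw [div_le_iff₀ (by positivity)]
  linarith

theorem ContDiffAt.hasDerivAt_deriv {f : ℝ → ℝ} {t : ℝ} {n : WithTop ℕ∞}
    (hf : ContDiffAt ℝ n f t) (hn : 2 ≤ n) : HasDerivAt (deriv f) (deriv (deriv f) t) t :=
  ((hf.derivWithin (m := 1) hn).differentiableAt one_ne_zero).hasDerivAt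

section Derivatives

variable {γ₁ γ₂ : ℝ → ℝ} {t p₁ q₁ p₂ q₂ : ℝ}

theorem hasDerivAt_Efn (h₁ : HasDerivAt γ₁ p₁ t) (h₂ : HasDerivAt γ₂ q₁ t)
    (h₁' : HasDerivAt (deriv γ₁) p₂ t) (h₂' : HasDerivAt (deriv γ₂) q₂ t) :
    HasDerivAt (Efn γ₁ γ₂) (γ₁ t * q₂ - γ₂ t * p₂) t := by
  have h := (h₁.mul h₂').sub (h₂.mul h₁')
  rw [h₁.deriv, h₂.deriv] at h
  exact h.congr_deriv (by ring)

theorem hasDerivAt_Dfn (h₁ : HasDerivAt γ₁ p₁ t) (h₂ : HasDerivAt γ₂ q₁ t)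
    (h₁' : HasDerivAt (deriv γ₁) p₂ t) (h₂' : HasDerivAt (deriv γ₂) q₂ t) :
    HasDerivAt (Dfn γ₁ γ₂) (γ₁ t * q₂ - γ₂ t * p₂ + p₂) t :=
  (hasDerivAt_Efn h₁ h₂ h₁' h₂').add h₁'

theorem hasDerivAt_Ffn (h₁ : HasDerivAt γ₁ p₁ t) (h₂ : HasDerivAt γ₂ q₁ t)
    (h₁' : HasDerivAt (deriv γ₁) p₂ t) (h₂' : HasDerivAt (deriv γ₂) q₂ t) :
    HasDerivAt (Ffn γ₁ γ₂)
      (2 * (p₁ * p₂ + q₁ * q₂ - (γ₁ t * q₁ - γ₂ t * p₁) * (γ₁ t * q₂ - γ₂ t * p₂))) t := by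
  have h := ((h₁'.pow 2).add (h₂'.pow 2)).sub ((hasDerivAt_Efn h₁ h₂ h₁' h₂').pow 2)
  rw [Efn, h₁.deriv, h₂.deriv] at h
  exact h.congr_deriv (by push_cast; ring)

theorem hasDerivAt_delta1 (h₁ : HasDerivAt γ₁ p₁ t) (h₂ : HasDerivAt γ₂ q₁ t)
    (h₁' : HasDerivAt (deriv γ₁) p₂ t) (h₂' : HasDerivAt (deriv γ₂) q₂ t)
    (hD : Dfn γ₁ γ₂ t ≠ 0) :
    HasDerivAt (delta1 γ₁ γ₂) ((1 - γ₂ t) * (p₁ * q₂ - p₂ * q₁) / Dfn γ₁ γ₂ t ^ 2) t := by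
  refine (h₂'.div (hasDerivAt_Dfn h₁ h₂ h₁' h₂') hD).congr_deriv ?_
  rw [div_left_inj' (pow_ne_zero 2 hD), Dfn, h₁.deriv, h₂.deriv]
  ring

theorem deriv_delta1_ne_zero (h₁ : HasDerivAt γ₁ p₁ t) (h₂ : HasDerivAt γ₂ q₁ t)
    (h₁' : HasDerivAt (deriv γ₁) p₂ t) (h₂' : HasDerivAt (deriv γ₂) q₂ t)
    (hin : γ₁ t ^ 2 + γ₂ t ^ 2 < 1) (hD : Dfn γ₁ γ₂ t ≠ 0) (hreg : p₁ * q₂ - p₂ * q₁ ≠ 0) :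
    deriv (delta1 γ₁ γ₂) t ≠ 0 := by
  have hq : 1 - γ₂ t ≠ 0 := by nlinarith [sq_nonneg (γ₁ t)]
  rw [(hasDerivAt_delta1 h₁ h₂ h₁' h₂' hD).deriv]
  exact div_ne_zero (mul_ne_zero hq hreg) (pow_ne_zero 2 hD)

theorem sq_deriv_delta2_le (h₁ : HasDerivAt γ₁ p₁ t) (h₂ : HasDerivAt γ₂ q₁ t)
    (h₁' : HasDerivAt (deriv γ₁) p₂ t) (h₂' : HasDerivAt (deriv γ₂) q₂ t)
    (hin : γ₁ t ^ 2 + γ₂ t ^ 2 ≤ 1) (hD : Dfn γ₁ γ₂ t ≠ 0) (hF : 0 < Ffn γ₁ γ₂ t) :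
    deriv (delta2 γ₁ γ₂) t ^ 2 ≤ deriv (delta1 γ₁ γ₂) t ^ 2 := by
  have hg := ((hasDerivAt_Ffn h₁ h₂ h₁' h₂').sqrt hF.ne').div (hasDerivAt_Dfn h₁ h₂ h₁' h₂') hD
  have hg0 : √(Ffn γ₁ γ₂ t) / Dfn γ₁ γ₂ t ≠ 0 := div_ne_zero (sqrt_ne_zero'.2 hF) hD
  have hδ₂ := ((hasDerivAt_abs hg0).comp t hg).congr_of_eventuallyEq
    (f₁ := delta2 γ₁ γ₂) (by rw [delta2_eq_abs]; rfl)
  have hsign : (SignType.sign (√(Ffn γ₁ γ₂ t) / Dfn γ₁ γ₂ t) : ℝ) ^ 2 = 1 := by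
    rcases hg0.lt_or_gt with h | h <;> simp [h]
  rw [hδ₂.deriv, (hasDerivAt_delta1 h₁ h₂ h₁' h₂' hD).deriv, mul_pow, hsign, one_mul]
  refine sq_deriv_sqrt_div_le hF (spacelike_ineq hin ?_ rfl ?_ rfl)
  · rw [Dfn, h₁.deriv, h₂.deriv]
  · rw [Ffn, Efn, h₁.deriv, h₂.deriv]

end Derivatives

section Smoothness

variable {γ₁ γ₂ : ℝ → ℝ} {t : ℝ} {n : ℕ∞}

theorem contDiffAt_Efn (h₁ : ContDiffAt ℝ (n + 1) γ₁ t) (h₂ : ContDiffAt ℝ (n + 1) γ₂ t) :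
    ContDiffAt ℝ n (Efn γ₁ γ₂) t :=
  ((h₁.of_le le_self_add).mul (h₂.derivWithin le_rfl)).sub
    ((h₂.of_le le_self_add).mul (h₁.derivWithin le_rfl))

theorem contDiffAt_Dfn (h₁ : ContDiffAt ℝ (n + 1) γ₁ t) (h₂ : ContDiffAt ℝ (n + 1) γ₂ t) :
    ContDiffAt ℝ n (Dfn γ₁ γ₂) t :=
  (contDiffAt_Efn h₁ h₂).add (h₁.derivWithin le_rfl)

theorem contDiffAt_Ffn (h₁ : ContDiffAt ℝ (n + 1) γ₁ t) (h₂ : ContDiffAt ℝ (n + 1) γ₂ t) :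
    ContDiffAt ℝ n (Ffn γ₁ γ₂) t :=
  (((h₁.derivWithin le_rfl).pow 2).add ((h₂.derivWithin le_rfl).pow 2)).sub
    ((contDiffAt_Efn h₁ h₂).pow 2)

theorem contDiffAt_delta1 (h₁ : ContDiffAt ℝ (n + 1) γ₁ t) (h₂ : ContDiffAt ℝ (n + 1) γ₂ t)
    (hD : Dfn γ₁ γ₂ t ≠ 0) : ContDiffAt ℝ n (delta1 γ₁ γ₂) t :=
  (h₂.derivWithin le_rfl).div (contDiffAt_Dfn h₁ h₂) hD

theorem contDiffAt_delta2 (h₁ : ContDiffAt ℝ (n + 1) γ₁ t) (h₂ : ContDiffAt ℝ (n + 1) γ₂ t)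
    (hD : Dfn γ₁ γ₂ t ≠ 0) (hF : 0 < Ffn γ₁ γ₂ t) : ContDiffAt ℝ n (delta2 γ₁ γ₂) t := by
  rw [delta2_eq_abs]
  exact (((contDiffAt_Ffn h₁ h₂).sqrt hF.ne').div (contDiffAt_Dfn h₁ h₂) hD).abs
    (div_ne_zero (sqrt_ne_zero'.2 hF) hD)

end Smoothness

/-- For a regular `C²` curve `γ` inside the unit circle whose tangent lines avoid the north
pole, the curve `δ = (δ₁, δ₂)` is `C¹` with nonvanishing derivative and traces a space like
curve: `δ₂′(t)² ≤ δ₁′(t)²`. -/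
theorem stmt6 (a b : ℝ) (γ₁ γ₂ : ℝ → ℝ)
    (hγ₁ : ContDiffOn ℝ 2 γ₁ (Set.Ioo a b)) (hγ₂ : ContDiffOn ℝ 2 γ₂ (Set.Ioo a b))
    (hin : ∀ t ∈ Set.Ioo a b, (γ₁ t) ^ 2 + (γ₂ t) ^ 2 < 1)
    (hD : ∀ t ∈ Set.Ioo a b, Dfn γ₁ γ₂ t ≠ 0)
    (hreg : ∀ t ∈ Set.Ioo a b,
      deriv γ₁ t * deriv (deriv γ₂) t - deriv (deriv γ₁) t * deriv γ₂ t ≠ 0) :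
    (∀ t ∈ Set.Ioo a b, 0 < (deriv γ₁ t) ^ 2 + (deriv γ₂ t) ^ 2 - Efn γ₁ γ₂ t ^ 2) ∧
    ContDiffOn ℝ 1 (delta1 γ₁ γ₂) (Set.Ioo a b) ∧
    ContDiffOn ℝ 1 (delta2 γ₁ γ₂) (Set.Ioo a b) ∧
    ∀ t ∈ Set.Ioo a b,
      (deriv (delta1 γ₁ γ₂) t, deriv (delta2 γ₁ γ₂) t) ≠ (0, 0) ∧
      (deriv (delta2 γ₁ γ₂) t) ^ 2 ≤ (deriv (delta1 γ₁ γ₂) t) ^ 2 := by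
  have hC2 : ∀ t ∈ Set.Ioo a b, ContDiffAt ℝ (1 + 1) γ₁ t ∧ ContDiffAt ℝ (1 + 1) γ₂ t :=
    fun t ht ↦ ⟨hγ₁.contDiffAt (isOpen_Ioo.mem_nhds ht), hγ₂.contDiffAt (isOpen_Ioo.mem_nhds ht)⟩
  have hF : ∀ t ∈ Set.Ioo a b, 0 < Ffn γ₁ γ₂ t := fun t ht ↦ Ffn_pos (hin t ht) (hreg t ht)
  refine ⟨hF, fun t ht ↦ ?_, fun t ht ↦ ?_, fun t ht ↦ ?_⟩
  · exact (contDiffAt_delta1 (hC2 t ht).1 (hC2 t ht).2 (hD t ht)).contDiffWithinAt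
  · exact (contDiffAt_delta2 (hC2 t ht).1 (hC2 t ht).2 (hD t ht) (hF t ht)).contDiffWithinAt
  obtain ⟨c₁, c₂⟩ := hC2 t ht
  have h₁ := (c₁.differentiableAt (by norm_num)).hasDerivAt
  have h₂ := (c₂.differentiableAt (by norm_num)).hasDerivAt
  have h₁' := c₁.hasDerivAt_deriv le_rfl
  have h₂' := c₂.hasDerivAt_deriv le_rfl
  have hδ₁ := deriv_delta1_ne_zero h₁ h₂ h₁' h₂' (hin t ht) (hD t ht) (hreg t ht)
  exact ⟨fun h ↦ hδ₁ (congrArg Prod.fst h),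
    sq_deriv_delta2_le h₁ h₂ h₁' h₂' (hin t ht).le (hD t ht) (hF t ht)⟩
end
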